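/- For all positive integers m and n, the map φ sending an element (λ,μ,κ) of the Heisenberg group H_ℝ^{(n,m)} to the real 2(m+n)×2(m+n) block matrix [[I_n, 0, 0, ᵗμ], [λ, I_m, μ, κ], [0, 0, I_n, −ᵗλ], [0, 0, 0, I_m]] (blocks of sizes n, m, n, m) takes values in the symplectic group Sp(m+n,ℝ), is injective, and is a group homomorphism: φ((λ,μ,κ)∘(λ₀,μ₀,κ₀)) = φ((λ,μ,κ))·φ((λ₀,μ₀,κ₀)) for all elements of H_ℝ^{(n,m)}. -/
import Mathlib


open Matrix

/-- The matrix `J` defining the symplectic group `Sp(m+n, ℝ)`, with blocks of sizes `n, m, n, m`. -/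
noncomputable def symplecticJ (m n : ℕ) :
    Matrix ((Fin n ⊕ Fin m) ⊕ (Fin n ⊕ Fin m)) ((Fin n ⊕ Fin m) ⊕ (Fin n ⊕ Fin m)) ℝ :=
  fromBlocks 0 1 (-1) 0

/-- The embedding of the Heisenberg group `H_ℝ^{(n,m)}` into `2(m+n) × 2(m+n)` real matrices. -/
noncomputable def heisenbergEmbed {m n : ℕ} (lam mu : Matrix (Fin m) (Fin n) ℝ)
    (ka : Matrix (Fin m) (Fin m) ℝ) :
    Matrix ((Fin n ⊕ Fin m) ⊕ (Fin n ⊕ Fin m)) ((Fin n ⊕ Fin m) ⊕ (Fin n ⊕ Fin m)) ℝ :=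
  fromBlocks (fromBlocks 1 0 lam 1) (fromBlocks 0 muᵀ mu ka) 0 (fromBlocks 1 (-lamᵀ) 0 1)

/-- The Heisenberg embedding takes values in `Sp(m+n,ℝ)`, is injective, and is a group
homomorphism for the Heisenberg multiplication. -/
theorem stmt0 (m n : ℕ) (hm : 0 < m) (hn : 0 < n) :
    (∀ (lam mu : Matrix (Fin m) (Fin n) ℝ) (ka : Matrix (Fin m) (Fin m) ℝ),
      (ka + mu * lamᵀ).IsSymm →
      (heisenbergEmbed lam mu ka)ᵀ * symplecticJ m n * heisenbergEmbed lam mu ka =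
        symplecticJ m n) ∧
    (∀ (lam mu lam' mu' : Matrix (Fin m) (Fin n) ℝ) (ka ka' : Matrix (Fin m) (Fin m) ℝ),
      (ka + mu * lamᵀ).IsSymm → (ka' + mu' * lam'ᵀ).IsSymm →
      heisenbergEmbed lam mu ka = heisenbergEmbed lam' mu' ka' →
      lam = lam' ∧ mu = mu' ∧ ka = ka') ∧
    (∀ (lam mu lam₀ mu₀ : Matrix (Fin m) (Fin n) ℝ) (ka ka₀ : Matrix (Fin m) (Fin m) ℝ),
      (ka + mu * lamᵀ).IsSymm → (ka₀ + mu₀ * lam₀ᵀ).IsSymm →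
      heisenbergEmbed (lam + lam₀) (mu + mu₀) (ka + ka₀ + lam * mu₀ᵀ - mu * lam₀ᵀ) =
        heisenbergEmbed lam mu ka * heisenbergEmbed lam₀ mu₀ ka₀) := by
  refine ⟨?_, ?_, ?_⟩
  · intro lam mu ka hsym
    have hs : kaᵀ + lam * muᵀ = ka + mu * lamᵀ := by
      have := hsym
      rw [Matrix.IsSymm, transpose_add, transpose_mul, transpose_transpose] at this
      exact this
    have hk : kaᵀ = ka + mu * lamᵀ - lam * muᵀ := by rw [← hs]; abel
    simp only [heisenbergEmbed, symplecticJ, fromBlocks_transpose, transpose_zero,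
      transpose_one, transpose_neg, transpose_transpose, fromBlocks_multiply,
      Matrix.mul_zero, Matrix.zero_mul, Matrix.mul_one, Matrix.one_mul,
      Matrix.mul_neg, Matrix.neg_mul, add_zero, zero_add, neg_zero, neg_neg]
    simp only [fromBlocks_inj]
    and_intros <;>
      first
        | trivial
        | (simp only [hk, ← fromBlocks_neg, ← fromBlocks_add, fromBlocks_inj]
           and_intros <;> abel)
        | (simp [Matrix.mul_add, Matrix.add_mul, transpose_add, transpose_mul,
             transpose_neg, transpose_transpose]
           all_goals noncomm_ring)
  · intro lam mu lam' mu' ka ka' _ _ h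
    simp only [heisenbergEmbed, fromBlocks_inj] at h
    exact ⟨h.1.2.2.1, h.2.1.2.2.1, h.2.1.2.2.2⟩
  · intro lam mu lam₀ mu₀ ka ka₀ _ _
    simp only [heisenbergEmbed, fromBlocks_multiply, Matrix.mul_zero, Matrix.zero_mul,
      Matrix.mul_one, Matrix.one_mul, Matrix.mul_neg, Matrix.neg_mul,
      add_zero, zero_add, neg_zero]
    simp only [fromBlocks_inj]
    and_intros <;>
      first
        | trivial
        | (simp only [transpose_add]
           rw [fromBlocks_add, fromBlocks_inj]
           and_intros <;> module)
        | (simp [transpose_add, neg_add]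
           all_goals abel)
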